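/- Invertibility of the left discontinuous product rule in DAf: for all types A and B and 1 ≤ k ≤ sA, if the sequent Δ⟨vec(A⊙_kB)⟩ ⊢w C (possibly containing one focalised formula, the indicated occurrence of A⊙_kB unfocused) is derivable in the weakly focalised calculus DAf, then Δ⟨vec(A)|_k vec(B)⟩ ⊢w C (with the same focus, if any) is derivable in DAf. -/

import Mathlib

/-!
Formalisation of the displacement calculus with additives DA, the weakly
focalised calculus DAf (with and without Cut) and the strongly focalised
calculus DAFoc, following Morrill–Valentín.
-/

namespace DA

/-- Bias of atomic types. -/
inductive Bias : Type where
  | pos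
  | neg
deriving DecidableEq

/-- Types of the displacement calculus with additives, indexed by their sort. -/
inductive Ty : ℕ → Type where
  | atom (b : Bias) (name : ℕ) (i : ℕ) : Ty i
  | over {i j : ℕ} : Ty (i + j) → Ty j → Ty i                                   -- C / B
  | under {i j : ℕ} : Ty i → Ty (i + j) → Ty j                                  -- A \ C
  | prod {i j : ℕ} : Ty i → Ty j → Ty (i + j)                                   -- A • B
  | unitI : Ty 0                                                                -- I
  | circ {i j : ℕ} (k : ℕ) (hk : 1 ≤ k ∧ k ≤ i + 1) : Ty (i + j) → Ty j → Ty (i + 1)   -- C ↑ₖ B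
  | infx {i j : ℕ} (k : ℕ) (hk : 1 ≤ k ∧ k ≤ i + 1) : Ty (i + 1) → Ty (i + j) → Ty j   -- A ↓ₖ C
  | wprod {i j : ℕ} (k : ℕ) (hk : 1 ≤ k ∧ k ≤ i + 1) : Ty (i + 1) → Ty j → Ty (i + j)  -- A ⊙ₖ B
  | unitJ : Ty 1                                                                -- J
  | amp {i : ℕ} : Ty i → Ty i → Ty i                                            -- A & B
  | oplus {i : ℕ} : Ty i → Ty i → Ty i                                          -- A ⊕ B

/-- `posb A = true` iff `A` is synchronous as an output (positive output /
asynchronous as an input): positive atoms and `•`, `I`, `⊙ₖ`, `J`, `⊕`.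
Otherwise `A` is synchronous as an input (negative atoms and `/`, `\`, `↑ₖ`,
`↓ₖ`, `&`). -/
def posb {i : ℕ} : Ty i → Bool
  | .atom .pos _ _ => true
  | .atom .neg _ _ => false
  | .over _ _ => false
  | .under _ _ => false
  | .prod _ _ => true
  | .unitI => true
  | .circ _ _ _ _ => false
  | .infx _ _ _ _ => false
  | .wprod _ _ _ _ => true
  | .unitJ => true
  | .amp _ _ => false
  | .oplus _ _ => true

def isAtom {i : ℕ} : Ty i → Bool
  | .atom _ _ _ => true
  | _ => false

/-- Elements of configurations: the separator `1`, types of sort 0, and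
figures `A{Δ₁ : … : Δ_{sA}}` of types of sort `> 0`; together with *boxed*
(focalised) variants of the latter two, used by the focalised calculi. -/
inductive BTree : Type where
  | sep : BTree
  | type0 : Ty 0 → BTree
  | btype0 : Ty 0 → BTree
  | fig {i : ℕ} : Ty (i + 1) → (Fin (i + 1) → List BTree) → BTree
  | bfig {i : ℕ} : Ty (i + 1) → (Fin (i + 1) → List BTree) → BTree

/-- Configurations (possibly containing boxed, i.e. focalised, occurrences). -/
abbrev BConfig := List BTree

/-- The figure `vec(A)` of a type `A`. -/
def vecT {i : ℕ} (A : Ty i) : BTree :=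
  match i, A with
  | 0, A => .type0 A
  | _ + 1, A => .fig A (fun _ => [BTree.sep])

def vec {i : ℕ} (A : Ty i) : BConfig := [vecT A]

/-- The boxed (focalised) figure `[vec(A)]` of a type `A`. -/
def bvecT {i : ℕ} (A : Ty i) : BTree :=
  match i, A with
  | 0, A => .btype0 A
  | _ + 1, A => .bfig A (fun _ => [BTree.sep])

def bvec {i : ℕ} (A : Ty i) : BConfig := [bvecT A]

/-- The premise occurrence of an active antecedent subformula in a synchronous
rule: focalised (boxed) if it is synchronous in the antecedent (negative),
unfocalised if asynchronous (positive). -/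
def fvec {i : ℕ} (A : Ty i) : BConfig := if posb A then vec A else bvec A

/-! Sort of a tree / configuration: its number of separators. -/
mutual
  inductive TreeSort : BTree → ℕ → Prop where
    | sep : TreeSort .sep 1
    | type0 (A : Ty 0) : TreeSort (.type0 A) 0
    | btype0 (A : Ty 0) : TreeSort (.btype0 A) 0
    | fig {i : ℕ} (A : Ty (i + 1)) (args : Fin (i + 1) → BConfig) (ns : Fin (i + 1) → ℕ) :
        (∀ k, ConfigSort (args k) (ns k)) → TreeSort (.fig A args) (Finset.univ.sum ns)
    | bfig {i : ℕ} (A : Ty (i + 1)) (args : Fin (i + 1) → BConfig) (ns : Fin (i + 1) → ℕ) :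
        (∀ k, ConfigSort (args k) (ns k)) → TreeSort (.bfig A args) (Finset.univ.sum ns)
  inductive ConfigSort : BConfig → ℕ → Prop where
    | nil : ConfigSort [] 0
    | cons {t : BTree} {ts : BConfig} {n m : ℕ} :
        TreeSort t n → ConfigSort ts m → ConfigSort (t :: ts) (n + m)
end

/-! Number of boxed (focalised) formula occurrences in a tree / configuration. -/
mutual
  inductive TBoxes : BTree → ℕ → Prop where
    | sep : TBoxes .sep 0
    | type0 (A : Ty 0) : TBoxes (.type0 A) 0
    | btype0 (A : Ty 0) : TBoxes (.btype0 A) 1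
    | fig {i : ℕ} (A : Ty (i + 1)) (args : Fin (i + 1) → BConfig) (ns : Fin (i + 1) → ℕ) :
        (∀ k, CBoxes (args k) (ns k)) → TBoxes (.fig A args) (Finset.univ.sum ns)
    | bfig {i : ℕ} (A : Ty (i + 1)) (args : Fin (i + 1) → BConfig) (ns : Fin (i + 1) → ℕ) :
        (∀ k, CBoxes (args k) (ns k)) → TBoxes (.bfig A args) (Finset.univ.sum ns + 1)
  inductive CBoxes : BConfig → ℕ → Prop where
    | nil : CBoxes [] 0
    | cons {t : BTree} {ts : BConfig} {n m : ℕ} :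
        TBoxes t n → CBoxes ts m → CBoxes (t :: ts) (n + m)
end

/-! The fold `Γ ⊗ ⟨Δ₁ : … : Δ_i⟩`: `FoldC Γ [Δ₁,…,Δ_i] res` holds iff `res` is
the result of replacing the successive separators of `Γ` by `Δ₁,…,Δ_i`. -/
mutual
  inductive FoldT : BTree → List BConfig → BConfig → Prop where
    | sep (Δ : BConfig) : FoldT .sep [Δ] Δ
    | type0 (A : Ty 0) : FoldT (.type0 A) [] [.type0 A]
    | btype0 (A : Ty 0) : FoldT (.btype0 A) [] [.btype0 A]
    | fig {i : ℕ} (A : Ty (i + 1)) (args args' : Fin (i + 1) → BConfig)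
        (reps : Fin (i + 1) → List BConfig) :
        (∀ k, FoldC (args k) (reps k) (args' k)) →
        FoldT (.fig A args) (List.ofFn reps).flatten [.fig A args']
    | bfig {i : ℕ} (A : Ty (i + 1)) (args args' : Fin (i + 1) → BConfig)
        (reps : Fin (i + 1) → List BConfig) :
        (∀ k, FoldC (args k) (reps k) (args' k)) →
        FoldT (.bfig A args) (List.ofFn reps).flatten [.bfig A args']
  inductive FoldC : BConfig → List BConfig → BConfig → Prop where
    | nil : FoldC [] [] []
    | cons {t : BTree} {ts : BConfig} {r1 r2 : List BConfig} {c1 c2 : BConfig} :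
        FoldT t r1 c1 → FoldC ts r2 c2 → FoldC (t :: ts) (r1 ++ r2) (c1 ++ c2)
end

/-- The `k`-th metalinguistic wrap `Δ |ₖ Γ`: `Wrap Δ k Γ res` holds iff `res`
is the result of replacing the `k`-th separator of `Δ` by `Γ`. -/
def Wrap (Δ : BConfig) (k : ℕ) (Γ res : BConfig) : Prop :=
  ∃ n : ℕ, ConfigSort Δ n ∧
    FoldC Δ ((List.replicate n ([BTree.sep] : BConfig)).set (k - 1) Γ) res

/-! One-hole contexts `Δ₀(—)` for configurations: the hole is a configuration
position, either at the top level or nested inside a figure argument. -/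
mutual
  inductive THole : Type where
    | fig {i : ℕ} (A : Ty (i + 1)) (args : Fin (i + 1) → BConfig) (k : Fin (i + 1))
        (c : CHole) : THole
    | bfig {i : ℕ} (A : Ty (i + 1)) (args : Fin (i + 1) → BConfig) (k : Fin (i + 1))
        (c : CHole) : THole
  inductive CHole : Type where
    | top (pre post : BConfig) : CHole
    | deep (pre : BConfig) (t : THole) (post : BConfig) : CHole
end

/-! Plugging a configuration into a one-hole context. -/
mutual
  inductive PlugT : THole → BConfig → BTree → Prop where
    | fig {i : ℕ} (A : Ty (i + 1)) (args : Fin (i + 1) → BConfig) (k : Fin (i + 1))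
        (c : CHole) (Γ plugged : BConfig) :
        PlugC c Γ plugged → PlugT (.fig A args k c) Γ (.fig A (Function.update args k plugged))
    | bfig {i : ℕ} (A : Ty (i + 1)) (args : Fin (i + 1) → BConfig) (k : Fin (i + 1))
        (c : CHole) (Γ plugged : BConfig) :
        PlugC c Γ plugged → PlugT (.bfig A args k c) Γ (.bfig A (Function.update args k plugged))
  inductive PlugC : CHole → BConfig → BConfig → Prop where
    | top (pre post Γ : BConfig) : PlugC (.top pre post) Γ (pre ++ Γ ++ post)
    | deep (pre post Γ : BConfig) (t : THole) (tr : BTree) :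
        PlugT t Γ tr → PlugC (.deep pre t post) Γ (pre ++ tr :: post)
end

/-- The data `Δ⟨—⟩ = Δ₀(— ⊗ ⟨Δ₁ : … : Δ_i⟩)` of a context in the generalised
sense of the displacement calculus. -/
structure Zone : Type where
  hole : CHole
  reps : List BConfig

/-- `Sub Z Γ res` holds iff `res = Δ⟨Γ⟩` for the context `Δ⟨—⟩` given by `Z`,
i.e. `res = Δ₀(Γ ⊗ ⟨Δ₁ : … : Δ_i⟩)`. -/
def Sub (Z : Zone) (Γ res : BConfig) : Prop :=
  ∃ folded : BConfig, FoldC Γ Z.reps folded ∧ PlugC Z.hole folded res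

/-- The displacement calculus with additives DA: `DADeriv Δ i A` is
derivability of the sequent `Δ ⇒ A` (identity axiom restricted to atoms). -/
inductive DADeriv : BConfig → ∀ i : ℕ, Ty i → Prop where
  | id (b : Bias) (name i : ℕ) :
      DADeriv (vec (.atom b name i)) i (.atom b name i)
  | overR {i j : ℕ} {Γ : BConfig} {C : Ty (i + j)} {B : Ty j} :
      DADeriv (Γ ++ vec B) (i + j) C → DADeriv Γ i (.over C B)
  | overL {i j d : ℕ} {Γ s1 s2 : BConfig} {B : Ty j} {C : Ty (i + j)} {Z : Zone} {D : Ty d} :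
      DADeriv Γ j B → Sub Z (vec C) s1 → DADeriv s1 d D →
      Sub Z (vec (.over C B) ++ Γ) s2 → DADeriv s2 d D
  | underR {i j : ℕ} {Γ : BConfig} {A : Ty i} {C : Ty (i + j)} :
      DADeriv (vec A ++ Γ) (i + j) C → DADeriv Γ j (.under A C)
  | underL {i j d : ℕ} {Γ s1 s2 : BConfig} {A : Ty i} {C : Ty (i + j)} {Z : Zone} {D : Ty d} :
      DADeriv Γ i A → Sub Z (vec C) s1 → DADeriv s1 d D →
      Sub Z (Γ ++ vec (.under A C)) s2 → DADeriv s2 d D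
  | prodR {i j : ℕ} {Γ1 Γ2 : BConfig} {A : Ty i} {B : Ty j} :
      DADeriv Γ1 i A → DADeriv Γ2 j B → DADeriv (Γ1 ++ Γ2) (i + j) (.prod A B)
  | prodL {i j d : ℕ} {s1 s2 : BConfig} {A : Ty i} {B : Ty j} {Z : Zone} {D : Ty d} :
      Sub Z (vec A ++ vec B) s1 → DADeriv s1 d D →
      Sub Z (vec (.prod A B)) s2 → DADeriv s2 d D
  | unitIR : DADeriv [] 0 .unitI
  | unitIL {d : ℕ} {s1 s2 : BConfig} {Z : Zone} {D : Ty d} :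
      Sub Z [] s1 → DADeriv s1 d D → Sub Z (vec .unitI) s2 → DADeriv s2 d D
  | circR {i j : ℕ} (k : ℕ) (hk : 1 ≤ k ∧ k ≤ i + 1) {Γ w : BConfig}
      {C : Ty (i + j)} {B : Ty j} :
      Wrap Γ k (vec B) w → DADeriv w (i + j) C → DADeriv Γ (i + 1) (.circ k hk C B)
  | circL {i j d : ℕ} (k : ℕ) (hk : 1 ≤ k ∧ k ≤ i + 1) {Γ w s1 s2 : BConfig}
      {C : Ty (i + j)} {B : Ty j} {Z : Zone} {D : Ty d} :
      DADeriv Γ j B → Sub Z (vec C) s1 → DADeriv s1 d D →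
      Wrap (vec (Ty.circ k hk C B)) k Γ w → Sub Z w s2 → DADeriv s2 d D
  | infxR {i j : ℕ} (k : ℕ) (hk : 1 ≤ k ∧ k ≤ i + 1) {Γ w : BConfig}
      {A : Ty (i + 1)} {C : Ty (i + j)} :
      Wrap (vec A) k Γ w → DADeriv w (i + j) C → DADeriv Γ j (.infx k hk A C)
  | infxL {i j d : ℕ} (k : ℕ) (hk : 1 ≤ k ∧ k ≤ i + 1) {Γ w s1 s2 : BConfig}
      {A : Ty (i + 1)} {C : Ty (i + j)} {Z : Zone} {D : Ty d} :
      DADeriv Γ (i + 1) A → Sub Z (vec C) s1 → DADeriv s1 d D →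
      Wrap Γ k (vec (Ty.infx k hk A C)) w → Sub Z w s2 → DADeriv s2 d D
  | wprodR {i j : ℕ} (k : ℕ) (hk : 1 ≤ k ∧ k ≤ i + 1) {Γ1 Γ2 w : BConfig}
      {A : Ty (i + 1)} {B : Ty j} :
      DADeriv Γ1 (i + 1) A → DADeriv Γ2 j B → Wrap Γ1 k Γ2 w →
      DADeriv w (i + j) (.wprod k hk A B)
  | wprodL {i j d : ℕ} (k : ℕ) (hk : 1 ≤ k ∧ k ≤ i + 1) {w s1 s2 : BConfig}
      {A : Ty (i + 1)} {B : Ty j} {Z : Zone} {D : Ty d} :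
      Wrap (vec A) k (vec B) w → Sub Z w s1 → DADeriv s1 d D →
      Sub Z (vec (.wprod k hk A B)) s2 → DADeriv s2 d D
  | unitJR : DADeriv [BTree.sep] 1 .unitJ
  | unitJL {d : ℕ} {s1 s2 : BConfig} {Z : Zone} {D : Ty d} :
      Sub Z [BTree.sep] s1 → DADeriv s1 d D → Sub Z (vec .unitJ) s2 → DADeriv s2 d D
  | ampR {i : ℕ} {Γ : BConfig} {A B : Ty i} :
      DADeriv Γ i A → DADeriv Γ i B → DADeriv Γ i (.amp A B)
  | ampL1 {i d : ℕ} {s1 s2 : BConfig} {A B : Ty i} {Z : Zone} {D : Ty d} :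
      Sub Z (vec A) s1 → DADeriv s1 d D → Sub Z (vec (.amp A B)) s2 → DADeriv s2 d D
  | ampL2 {i d : ℕ} {s1 s2 : BConfig} {A B : Ty i} {Z : Zone} {D : Ty d} :
      Sub Z (vec B) s1 → DADeriv s1 d D → Sub Z (vec (.amp A B)) s2 → DADeriv s2 d D
  | oplusR1 {i : ℕ} {Γ : BConfig} {A B : Ty i} :
      DADeriv Γ i A → DADeriv Γ i (.oplus A B)
  | oplusR2 {i : ℕ} {Γ : BConfig} {A B : Ty i} :
      DADeriv Γ i B → DADeriv Γ i (.oplus A B)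
  | oplusL {i d : ℕ} {s1 s2 s3 : BConfig} {A B : Ty i} {Z : Zone} {D : Ty d} :
      Sub Z (vec A) s1 → DADeriv s1 d D → Sub Z (vec B) s2 → DADeriv s2 d D →
      Sub Z (vec (.oplus A B)) s3 → DADeriv s3 d D

/-! Occurrence of a type satisfying `φ` somewhere in a configuration
(as the head type of a tree/figure, possibly nested). -/
mutual
  inductive TOcc (φ : ∀ j : ℕ, Ty j → Prop) : BTree → Prop where
    | type0 {A : Ty 0} : φ 0 A → TOcc φ (.type0 A)
    | btype0 {A : Ty 0} : φ 0 A → TOcc φ (.btype0 A)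
    | figHead {i : ℕ} {A : Ty (i + 1)} {args : Fin (i + 1) → BConfig} :
        φ (i + 1) A → TOcc φ (.fig A args)
    | bfigHead {i : ℕ} {A : Ty (i + 1)} {args : Fin (i + 1) → BConfig} :
        φ (i + 1) A → TOcc φ (.bfig A args)
    | figArg {i : ℕ} {A : Ty (i + 1)} {args : Fin (i + 1) → BConfig} (k : Fin (i + 1)) :
        COcc φ (args k) → TOcc φ (.fig A args)
    | bfigArg {i : ℕ} {A : Ty (i + 1)} {args : Fin (i + 1) → BConfig} (k : Fin (i + 1)) :
        COcc φ (args k) → TOcc φ (.bfig A args)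
  inductive COcc (φ : ∀ j : ℕ, Ty j → Prop) : BConfig → Prop where
    | head {t : BTree} {ts : BConfig} : TOcc φ t → COcc φ (t :: ts)
    | tail {t : BTree} {ts : BConfig} : COcc φ ts → COcc φ (t :: ts)
end

/-- The sequent `Δ ⊢ A` contains a complex (non-atomic) asynchronous formula
occurrence: a non-atomic positive type in the antecedent, or a non-atomic
negative succedent. -/
def HasComplexAsync (Δ : BConfig) (i : ℕ) (A : Ty i) : Prop :=
  COcc (fun _ B => posb B = true ∧ isAtom B = false) Δ ∨
    (posb A = false ∧ isAtom A = false)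

/-- A sequent (antecedent plus succedent-focus flag) contains at most one
focalised formula. -/
def AtMostOne (Δ : BConfig) (f : Bool) : Prop :=
  if f then CBoxes Δ 0 else (CBoxes Δ 0 ∨ CBoxes Δ 1)

/-- A sequent contains exactly one focalised formula. -/
def ExactlyOne (Δ : BConfig) (f : Bool) : Prop :=
  if f then CBoxes Δ 0 else CBoxes Δ 1

/-- Side condition of the strongly focalised calculus: a sequent containing a
focalised formula contains no complex asynchronous formula occurrence (and
vice versa). -/
def Ok (strong : Bool) (Δ : BConfig) (f : Bool) (i : ℕ) (A : Ty i) : Prop :=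
  strong = true → ¬ ((f = true ∨ ¬ CBoxes Δ 0) ∧ HasComplexAsync Δ i A)

/-- Focalised sequent calculus: `DW cuts strong Δ f i A` is derivability of
the sequent `Δ ⊢ A`, whose succedent is focalised iff `f = true` and whose
focalised antecedent formulas are the boxed occurrences of `Δ`.
`cuts = true` allows the Cut rules (weakly focalised calculus DAf);
`cuts = false` is Cut-free DAf; `strong = true` additionally imposes the
strong focalisation discipline (DAFoc, taken with `cuts = false`). -/
inductive DW (cuts strong : Bool) : BConfig → Bool → ∀ i : ℕ, Ty i → Prop where
  -- identity axioms, restricted to atoms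
  | idP (name i : ℕ) :
      DW cuts strong (vec (.atom .pos name i)) true i (.atom .pos name i)
  | idQ (name i : ℕ) :
      DW cuts strong (bvec (.atom .neg name i)) false i (.atom .neg name i)
  -- focusing rules
  | focR {i : ℕ} {Δ : BConfig} {P : Ty i} :
      posb P = true →
      DW cuts strong Δ true i P →
      AtMostOne Δ false → Ok strong Δ false i P →
      DW cuts strong Δ false i P
  | focL {j d : ℕ} {Q : Ty j} {D : Ty d} {Z : Zone} {s1 s2 : BConfig} :
      posb Q = false →
      Sub Z (bvec Q) s1 → DW cuts strong s1 false d D →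
      Sub Z (vec Q) s2 → AtMostOne s2 false → Ok strong s2 false d D →
      DW cuts strong s2 false d D
  -- asynchronous right rules
  | overR {i j : ℕ} {Γ : BConfig} {C : Ty (i + j)} {B : Ty j} :
      DW cuts strong (Γ ++ vec B) false (i + j) C →
      AtMostOne Γ false → Ok strong Γ false i (.over C B) →
      DW cuts strong Γ false i (.over C B)
  | underR {i j : ℕ} {Γ : BConfig} {A : Ty i} {C : Ty (i + j)} :
      DW cuts strong (vec A ++ Γ) false (i + j) C →
      AtMostOne Γ false → Ok strong Γ false j (.under A C) →
      DW cuts strong Γ false j (.under A C)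
  | circR {i j : ℕ} (k : ℕ) (hk : 1 ≤ k ∧ k ≤ i + 1) {Γ w : BConfig}
      {C : Ty (i + j)} {B : Ty j} :
      Wrap Γ k (vec B) w → DW cuts strong w false (i + j) C →
      AtMostOne Γ false → Ok strong Γ false (i + 1) (.circ k hk C B) →
      DW cuts strong Γ false (i + 1) (.circ k hk C B)
  | infxR {i j : ℕ} (k : ℕ) (hk : 1 ≤ k ∧ k ≤ i + 1) {Γ w : BConfig}
      {A : Ty (i + 1)} {C : Ty (i + j)} :
      Wrap (vec A) k Γ w → DW cuts strong w false (i + j) C →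
      AtMostOne Γ false → Ok strong Γ false j (.infx k hk A C) →
      DW cuts strong Γ false j (.infx k hk A C)
  | ampR {i : ℕ} {Γ : BConfig} {A B : Ty i} :
      DW cuts strong Γ false i A → DW cuts strong Γ false i B →
      AtMostOne Γ false → Ok strong Γ false i (.amp A B) →
      DW cuts strong Γ false i (.amp A B)
  -- asynchronous left rules
  | prodL {i j d : ℕ} {f : Bool} {s1 s2 : BConfig} {A : Ty i} {B : Ty j}
      {Z : Zone} {D : Ty d} :
      Sub Z (vec A ++ vec B) s1 → DW cuts strong s1 f d D →
      Sub Z (vec (.prod A B)) s2 → AtMostOne s2 f → Ok strong s2 f d D →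
      DW cuts strong s2 f d D
  | unitIL {d : ℕ} {f : Bool} {s1 s2 : BConfig} {Z : Zone} {D : Ty d} :
      Sub Z [] s1 → DW cuts strong s1 f d D →
      Sub Z (vec .unitI) s2 → AtMostOne s2 f → Ok strong s2 f d D →
      DW cuts strong s2 f d D
  | wprodL {i j d : ℕ} (k : ℕ) (hk : 1 ≤ k ∧ k ≤ i + 1) {f : Bool}
      {w s1 s2 : BConfig} {A : Ty (i + 1)} {B : Ty j} {Z : Zone} {D : Ty d} :
      Wrap (vec A) k (vec B) w → Sub Z w s1 → DW cuts strong s1 f d D →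
      Sub Z (vec (.wprod k hk A B)) s2 → AtMostOne s2 f → Ok strong s2 f d D →
      DW cuts strong s2 f d D
  | unitJL {d : ℕ} {f : Bool} {s1 s2 : BConfig} {Z : Zone} {D : Ty d} :
      Sub Z [BTree.sep] s1 → DW cuts strong s1 f d D →
      Sub Z (vec .unitJ) s2 → AtMostOne s2 f → Ok strong s2 f d D →
      DW cuts strong s2 f d D
  | oplusL {i d : ℕ} {f : Bool} {s1 s2 s3 : BConfig} {A B : Ty i} {Z : Zone} {D : Ty d} :
      Sub Z (vec A) s1 → DW cuts strong s1 f d D →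
      Sub Z (vec B) s2 → DW cuts strong s2 f d D →
      Sub Z (vec (.oplus A B)) s3 → AtMostOne s3 f → Ok strong s3 f d D →
      DW cuts strong s3 f d D
  -- synchronous left rules (active formula focalised)
  | overL {i j d : ℕ} {Γ s1 s2 : BConfig} {B : Ty j} {C : Ty (i + j)} {Z : Zone} {D : Ty d} :
      DW cuts strong Γ (posb B) j B →
      Sub Z (fvec C) s1 → DW cuts strong s1 false d D →
      Sub Z (bvec (.over C B) ++ Γ) s2 → AtMostOne s2 false → Ok strong s2 false d D →
      DW cuts strong s2 false d D
  | underL {i j d : ℕ} {Γ s1 s2 : BConfig} {A : Ty i} {C : Ty (i + j)} {Z : Zone} {D : Ty d} :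
      DW cuts strong Γ (posb A) i A →
      Sub Z (fvec C) s1 → DW cuts strong s1 false d D →
      Sub Z (Γ ++ bvec (.under A C)) s2 → AtMostOne s2 false → Ok strong s2 false d D →
      DW cuts strong s2 false d D
  | circL {i j d : ℕ} (k : ℕ) (hk : 1 ≤ k ∧ k ≤ i + 1) {Γ w s1 s2 : BConfig}
      {C : Ty (i + j)} {B : Ty j} {Z : Zone} {D : Ty d} :
      DW cuts strong Γ (posb B) j B →
      Sub Z (fvec C) s1 → DW cuts strong s1 false d D →
      Wrap (bvec (Ty.circ k hk C B)) k Γ w → Sub Z w s2 →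
      AtMostOne s2 false → Ok strong s2 false d D →
      DW cuts strong s2 false d D
  | infxL {i j d : ℕ} (k : ℕ) (hk : 1 ≤ k ∧ k ≤ i + 1) {Γ w s1 s2 : BConfig}
      {A : Ty (i + 1)} {C : Ty (i + j)} {Z : Zone} {D : Ty d} :
      DW cuts strong Γ (posb A) (i + 1) A →
      Sub Z (fvec C) s1 → DW cuts strong s1 false d D →
      Wrap Γ k (bvec (Ty.infx k hk A C)) w → Sub Z w s2 →
      AtMostOne s2 false → Ok strong s2 false d D →
      DW cuts strong s2 false d D
  | ampL1 {i d : ℕ} {s1 s2 : BConfig} {A B : Ty i} {Z : Zone} {D : Ty d} :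
      Sub Z (fvec A) s1 → DW cuts strong s1 false d D →
      Sub Z (bvec (.amp A B)) s2 → AtMostOne s2 false → Ok strong s2 false d D →
      DW cuts strong s2 false d D
  | ampL2 {i d : ℕ} {s1 s2 : BConfig} {A B : Ty i} {Z : Zone} {D : Ty d} :
      Sub Z (fvec B) s1 → DW cuts strong s1 false d D →
      Sub Z (bvec (.amp A B)) s2 → AtMostOne s2 false → Ok strong s2 false d D →
      DW cuts strong s2 false d D
  -- synchronous right rules (succedent focalised)
  | prodR {i j : ℕ} {Γ1 Γ2 : BConfig} {A : Ty i} {B : Ty j} :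
      DW cuts strong Γ1 (posb A) i A → DW cuts strong Γ2 (posb B) j B →
      AtMostOne (Γ1 ++ Γ2) true → Ok strong (Γ1 ++ Γ2) true (i + j) (.prod A B) →
      DW cuts strong (Γ1 ++ Γ2) true (i + j) (.prod A B)
  | unitIR : DW cuts strong [] true 0 .unitI
  | wprodR {i j : ℕ} (k : ℕ) (hk : 1 ≤ k ∧ k ≤ i + 1) {Γ1 Γ2 w : BConfig}
      {A : Ty (i + 1)} {B : Ty j} :
      DW cuts strong Γ1 (posb A) (i + 1) A → DW cuts strong Γ2 (posb B) j B →
      Wrap Γ1 k Γ2 w →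
      AtMostOne w true → Ok strong w true (i + j) (.wprod k hk A B) →
      DW cuts strong w true (i + j) (.wprod k hk A B)
  | unitJR : DW cuts strong [BTree.sep] true 1 .unitJ
  | oplusR1 {i : ℕ} {Γ : BConfig} {A B : Ty i} :
      DW cuts strong Γ (posb A) i A →
      AtMostOne Γ true → Ok strong Γ true i (.oplus A B) →
      DW cuts strong Γ true i (.oplus A B)
  | oplusR2 {i : ℕ} {Γ : BConfig} {A B : Ty i} :
      DW cuts strong Γ (posb B) i B →
      AtMostOne Γ true → Ok strong Γ true i (.oplus A B) →
      DW cuts strong Γ true i (.oplus A B)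
  -- Cut rules (weakly focalised calculus only)
  | pcut1 {j d : ℕ} {f : Bool} {Γ s1 s2 : BConfig} {P : Ty j} {Z : Zone} {C : Ty d} :
      cuts = true → posb P = true →
      DW cuts strong Γ true j P →
      Sub Z (vec P) s1 → DW cuts strong s1 f d C →
      Sub Z Γ s2 → AtMostOne s2 f →
      DW cuts strong s2 f d C
  | pcut2 {j d : ℕ} {Γ s1 s2 : BConfig} {N : Ty j} {Z : Zone} {C : Ty d} :
      cuts = true → posb N = false →
      DW cuts strong Γ false j N →
      Sub Z (bvec N) s1 → DW cuts strong s1 false d C →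
      Sub Z Γ s2 → AtMostOne s2 false →
      DW cuts strong s2 false d C
  | ncut1 {j d : ℕ} {Γ s1 s2 : BConfig} {P : Ty j} {Z : Zone} {C : Ty d} :
      cuts = true → posb P = true →
      DW cuts strong Γ false j P →
      Sub Z (vec P) s1 → CBoxes s1 0 → DW cuts strong s1 false d C →
      Sub Z Γ s2 → AtMostOne s2 false →
      DW cuts strong s2 false d C
  | ncut2 {j d : ℕ} {f : Bool} {Γ s1 s2 : BConfig} {N : Ty j} {Z : Zone} {C : Ty d} :
      cuts = true → posb N = false →
      CBoxes Γ 0 → DW cuts strong Γ false j N →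
      Sub Z (vec N) s1 → DW cuts strong s1 f d C →
      Sub Z Γ s2 → AtMostOne s2 f →
      DW cuts strong s2 f d C

/-- The weakly focalised calculus DAf. -/
abbrev DAf (Δ : BConfig) (f : Bool) (i : ℕ) (A : Ty i) : Prop := DW true false Δ f i A

/-- Cut-free DAf. -/
abbrev DAfCutFree (Δ : BConfig) (f : Bool) (i : ℕ) (A : Ty i) : Prop := DW false false Δ f i A

/-- The strongly focalised calculus DAFoc. -/
abbrev DAFoc (Δ : BConfig) (f : Bool) (i : ℕ) (A : Ty i) : Prop := DW false true Δ f i A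

/-- Transport of a type along an equality of sorts. -/
def tcast {i j : ℕ} (h : i = j) (A : Ty i) : Ty j := h ▸ A

end DA

/-!
In DAf the rule `⊙ₖL` is inverted by a cut: `vec(A) |ₖ vec(B) ⊢ [A ⊙ₖ B]` follows by `⊙ₖR`
from the identity expansions of `A` and `B`, and cutting it (`pcut1`) against
`Δ⟨vec(A ⊙ₖ B)⟩ ⊢ C` replaces `vec(A ⊙ₖ B)` by `vec(A) |ₖ vec(B)`. The focus is preserved
because neither configuration contains a focalised formula. Identity expansion `vec(A) ⊢ A`,
focalised according to the polarity of `A`, holds by induction on `A`, combining the left and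
right rules of its main connective.
-/

theorem List.flatten_ofFn_replicate {α : Type*} (a : α) {n : ℕ} (f : Fin n → ℕ) :
    (List.ofFn fun k => List.replicate (f k) a).flatten = List.replicate (∑ k, f k) a := by
  induction n with
  | zero => simp
  | succ n ih => simp [List.ofFn_succ, Fin.sum_univ_succ, ih]

theorem List.flatten_ofFn_singleton {α : Type*} {n : ℕ} (g : Fin n → α) :
    (List.ofFn fun m => [g m]).flatten = List.ofFn g := by
  rw [← List.flatMap_singleton' (List.ofFn g), List.flatMap_def, List.map_ofFn]
  rfl

theorem List.ofFn_ite_eq_set_replicate {α : Type*} (n k : ℕ) (a x : α) :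
    List.ofFn (fun m : Fin n => if (m : ℕ) = k then x else a) = (List.replicate n a).set k x := by
  apply List.ext_getElem <;> simp [List.getElem_set, eq_comm]

theorem List.sum_set_replicate_add {n m a x : ℕ} (h : m < n) :
    ((List.replicate n a).set m x).sum + a = n * a + x := by
  obtain ⟨r, rfl⟩ : ∃ r, n = m + 1 + r := ⟨n - m - 1, by omega⟩
  simp only [List.sum_set, List.take_replicate, List.drop_replicate, List.sum_replicate,
    List.length_replicate, h, if_true, smul_eq_mul, min_eq_left (by omega : m ≤ m + 1 + r)]
  rw [show m + 1 + r - (m + 1) = r by omega]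
  ring

namespace DA

mutual
def tcount (s b : ℕ) : BTree → ℕ
  | .sep => s
  | .type0 _ => 0
  | .btype0 _ => b
  | .fig _ args => ∑ k, ccount s b (args k)
  | .bfig _ args => ∑ k, ccount s b (args k) + b
def ccount (s b : ℕ) : BConfig → ℕ
  | [] => 0
  | t :: ts => tcount s b t + ccount s b ts
end

abbrev csort : BConfig → ℕ := ccount 1 0
abbrev cboxes : BConfig → ℕ := ccount 0 1

section Counting

variable {s b : ℕ}

@[simp] theorem ccount_nil : ccount s b [] = 0 := by simp [ccount]

@[simp] theorem ccount_cons (t : BTree) (ts : BConfig) :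
    ccount s b (t :: ts) = tcount s b t + ccount s b ts := by simp [ccount]

@[simp] theorem ccount_append (Γ Δ : BConfig) :
    ccount s b (Γ ++ Δ) = ccount s b Γ + ccount s b Δ := by
  induction Γ with
  | nil => simp
  | cons t ts ih => simp [ih, Nat.add_assoc]

@[simp] theorem ccount_sep : ccount s b [.sep] = s := by simp [tcount]

@[simp] theorem ccount_vec {i : ℕ} (A : Ty i) : ccount s b (vec A) = i * s := by
  cases i <;> simp [vec, vecT, tcount]

@[simp] theorem ccount_bvec {i : ℕ} (A : Ty i) : ccount s b (bvec A) = i * s + b := by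
  cases i <;> simp [bvec, bvecT, tcount]

@[simp] theorem csort_fvec {i : ℕ} (A : Ty i) : csort (fvec A) = i := by
  unfold fvec; split <;> simp

mutual
theorem FoldT.ccount_eq {t : BTree} {L : List BConfig} {res : BConfig} :
    FoldT t L res → ccount s b res + s * L.length = tcount s b t + (L.map (ccount s b)).sum
  | .sep _ => by simp [tcount, add_comm]
  | .type0 _ => by simp [tcount]
  | .btype0 _ => by simp [tcount]
  | .fig _ _ _ _ h => by
      have hargs := Finset.sum_congr rfl fun k (_ : k ∈ Finset.univ) => (h k).ccount_eq
      simp only [Finset.sum_add_distrib] at hargs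
      simp only [ccount_cons, ccount_nil, tcount, List.length_flatten, List.map_flatten,
        List.sum_flatten, List.map_ofFn, List.sum_ofFn, Function.comp_def, Finset.mul_sum]
      omega
  | .bfig _ _ _ _ h => by
      have hargs := Finset.sum_congr rfl fun k (_ : k ∈ Finset.univ) => (h k).ccount_eq
      simp only [Finset.sum_add_distrib] at hargs
      simp only [ccount_cons, ccount_nil, tcount, List.length_flatten, List.map_flatten,
        List.sum_flatten, List.map_ofFn, List.sum_ofFn, Function.comp_def, Finset.mul_sum]
      omega
theorem FoldC.ccount_eq {Γ : BConfig} {L : List BConfig} {res : BConfig} :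
    FoldC Γ L res → ccount s b res + s * L.length = ccount s b Γ + (L.map (ccount s b)).sum
  | .nil => by simp
  | .cons ht hts => by
      have := ht.ccount_eq
      have := hts.ccount_eq
      simp only [ccount_append, List.length_append, List.map_append, List.sum_append, ccount_cons]
      linarith
end

mutual
theorem PlugT.tcount_add {h : THole} {Γ Γ' : BConfig} {t t' : BTree} :
    PlugT h Γ t → PlugT h Γ' t' → tcount s b t + ccount s b Γ' = tcount s b t' + ccount s b Γ
  | .fig _ _ k _ _ _ hp, .fig _ _ _ _ _ _ hp' => by
      have := hp.ccount_add hp'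
      simp only [tcount, Function.apply_update (fun _ => ccount s b),
        Finset.sum_update_of_mem (Finset.mem_univ k)]
      omega
  | .bfig _ _ k _ _ _ hp, .bfig _ _ _ _ _ _ hp' => by
      have := hp.ccount_add hp'
      simp only [tcount, Function.apply_update (fun _ => ccount s b),
        Finset.sum_update_of_mem (Finset.mem_univ k)]
      omega
theorem PlugC.ccount_add {h : CHole} {Γ Γ' res res' : BConfig} :
    PlugC h Γ res → PlugC h Γ' res' →
      ccount s b res + ccount s b Γ' = ccount s b res' + ccount s b Γ
  | .top _ _ _, .top _ _ _ => by simp only [ccount_append]; omega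
  | .deep _ _ _ _ _ ht, .deep _ _ _ _ _ ht' => by
      have := ht.tcount_add ht'
      simp only [ccount_append, ccount_cons]
      omega
end

theorem Sub.ccount_add {Z : Zone} {Γ Γ' res res' : BConfig} (h : Sub Z Γ res)
    (h' : Sub Z Γ' res') : ccount s b res + ccount s b Γ' = ccount s b res' + ccount s b Γ := by
  obtain ⟨c, hc, hp⟩ := h
  obtain ⟨c', hc', hp'⟩ := h'
  have := hc.ccount_eq (s := s) (b := b)
  have := hc'.ccount_eq (s := s) (b := b)
  have := hp.ccount_add hp' (s := s) (b := b)
  omega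

end Counting

mutual
theorem TreeSort.eq_tcount {t : BTree} {n : ℕ} : TreeSort t n → tcount 1 0 t = n
  | .sep => by simp [tcount]
  | .type0 _ => by simp [tcount]
  | .btype0 _ => by simp [tcount]
  | .fig _ _ _ h => by
      simp only [tcount]; exact Finset.sum_congr rfl fun k _ => (h k).eq_csort
  | .bfig _ _ _ h => by
      simp only [tcount, add_zero]; exact Finset.sum_congr rfl fun k _ => (h k).eq_csort
theorem ConfigSort.eq_csort {Δ : BConfig} {n : ℕ} : ConfigSort Δ n → csort Δ = n
  | .nil => by simp
  | .cons ht hts => by simp [ht.eq_tcount, hts.eq_csort]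
end

mutual
theorem treeSort_tcount : ∀ t : BTree, TreeSort t (tcount 1 0 t)
  | .sep => .sep
  | .type0 A => .type0 A
  | .btype0 A => .btype0 A
  | .fig A args => by
      simpa [tcount] using TreeSort.fig A args _ fun k => configSort_csort (args k)
  | .bfig A args => by
      simpa [tcount] using TreeSort.bfig A args _ fun k => configSort_csort (args k)
theorem configSort_csort : ∀ Δ : BConfig, ConfigSort Δ (csort Δ)
  | [] => .nil
  | t :: ts => by simpa using ConfigSort.cons (treeSort_tcount t) (configSort_csort ts)
end

theorem configSort_iff {Δ : BConfig} {n : ℕ} : ConfigSort Δ n ↔ csort Δ = n :=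
  ⟨ConfigSort.eq_csort, fun h => h ▸ configSort_csort Δ⟩

mutual
theorem TBoxes.eq_tcount {t : BTree} {n : ℕ} : TBoxes t n → tcount 0 1 t = n
  | .sep => by simp [tcount]
  | .type0 _ => by simp [tcount]
  | .btype0 _ => by simp [tcount]
  | .fig _ _ _ h => by
      simp only [tcount]; exact Finset.sum_congr rfl fun k _ => (h k).eq_cboxes
  | .bfig _ _ _ h => by
      simp only [tcount]
      exact congrArg (· + 1) (Finset.sum_congr rfl fun k _ => (h k).eq_cboxes)
theorem CBoxes.eq_cboxes {Δ : BConfig} {n : ℕ} : CBoxes Δ n → cboxes Δ = n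
  | .nil => by simp
  | .cons ht hts => by simp [ht.eq_tcount, hts.eq_cboxes]
end

mutual
theorem tBoxes_tcount : ∀ t : BTree, TBoxes t (tcount 0 1 t)
  | .sep => .sep
  | .type0 A => .type0 A
  | .btype0 A => .btype0 A
  | .fig A args => by
      simpa [tcount] using TBoxes.fig A args _ fun k => cBoxes_cboxes (args k)
  | .bfig A args => by
      simpa [tcount] using TBoxes.bfig A args _ fun k => cBoxes_cboxes (args k)
theorem cBoxes_cboxes : ∀ Δ : BConfig, CBoxes Δ (cboxes Δ)
  | [] => .nil
  | t :: ts => by simpa using CBoxes.cons (tBoxes_tcount t) (cBoxes_cboxes ts)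
end

theorem cBoxes_iff {Δ : BConfig} {n : ℕ} : CBoxes Δ n ↔ cboxes Δ = n :=
  ⟨CBoxes.eq_cboxes, fun h => h ▸ cBoxes_cboxes Δ⟩

theorem atMostOne_iff {Δ : BConfig} {f : Bool} : AtMostOne Δ f ↔ cboxes Δ + f.toNat ≤ 1 := by
  cases f
  · simp [AtMostOne, cBoxes_iff]; omega
  · simp [AtMostOne, cBoxes_iff]

theorem Wrap.ccount_add {s b : ℕ} {Δ Γ w : BConfig} {k : ℕ} (h : Wrap Δ k Γ w)
    (hk : k - 1 < csort Δ) : ccount s b w + s = ccount s b Δ + ccount s b Γ := by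
  obtain ⟨n, hn, hf⟩ := h
  rw [configSort_iff] at hn
  subst hn
  have := hf.ccount_eq (s := s) (b := b)
  have := List.sum_set_replicate_add (a := s) (x := ccount s b Γ) hk
  simp only [List.length_set, List.length_replicate, List.map_set, List.map_replicate,
    ccount_sep] at *
  linarith

theorem Wrap.csort_add {Δ Γ w : BConfig} {k : ℕ} (h : Wrap Δ k Γ w) (hk : k - 1 < csort Δ) :
    csort w + 1 = csort Δ + csort Γ :=
  h.ccount_add hk

theorem Wrap.cboxes_eq {Δ Γ w : BConfig} {k : ℕ} (h : Wrap Δ k Γ w) (hk : k - 1 < csort Δ) :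
    cboxes w = cboxes Δ + cboxes Γ :=
  (add_zero _).symm.trans (h.ccount_add hk)

mutual
theorem foldT_self : ∀ t : BTree, FoldT t (List.replicate (tcount 1 0 t) [.sep]) [t]
  | .sep => .sep _
  | .type0 A => .type0 A
  | .btype0 A => .btype0 A
  | .fig A args => by
      have h := FoldT.fig A args args _ fun k => foldC_self (args k)
      rwa [List.flatten_ofFn_replicate] at h
  | .bfig A args => by
      have h := FoldT.bfig A args args _ fun k => foldC_self (args k)
      rwa [List.flatten_ofFn_replicate] at h
theorem foldC_self : ∀ Δ : BConfig, FoldC Δ (List.replicate (csort Δ) [.sep]) Δ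
  | [] => .nil
  | t :: ts => by simpa using FoldC.cons (foldT_self t) (foldC_self ts)
end

def idZone (n : ℕ) : Zone := ⟨.top [] [], List.replicate n [.sep]⟩

theorem sub_idZone {Δ : BConfig} {n : ℕ} (h : csort Δ = n) : Sub (idZone n) Δ Δ :=
  ⟨Δ, h ▸ foldC_self Δ, by simpa [idZone] using PlugC.top [] [] Δ⟩

theorem exists_foldC_sep_set_replicate (n k : ℕ) (Γ : BConfig) :
    ∃ args' : Fin n → BConfig, ∃ reps : Fin n → List BConfig,
      (∀ m, FoldC [.sep] (reps m) (args' m)) ∧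
        (List.ofFn reps).flatten = (List.replicate n [.sep]).set k Γ := by
  refine ⟨fun m => if (m : ℕ) = k then Γ else [.sep],
    fun m => [if (m : ℕ) = k then Γ else [.sep]],
    fun m => by simpa using FoldC.cons (FoldT.sep _) .nil, ?_⟩
  rw [List.flatten_ofFn_singleton, List.ofFn_ite_eq_set_replicate]

theorem exists_wrap_vec {i : ℕ} (A : Ty (i + 1)) (k : ℕ) (Γ : BConfig) :
    ∃ w, Wrap (vec A) k Γ w := by
  obtain ⟨args', reps, hf, hreps⟩ := exists_foldC_sep_set_replicate (i + 1) (k - 1) Γ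
  refine ⟨[.fig A args'], i + 1, configSort_iff.2 (by simp), ?_⟩
  have h := FoldC.cons (FoldT.fig A _ args' reps hf) .nil
  rwa [hreps, List.append_nil, List.append_nil] at h

theorem exists_wrap_bvec {i : ℕ} (A : Ty (i + 1)) (k : ℕ) (Γ : BConfig) :
    ∃ w, Wrap (bvec A) k Γ w := by
  obtain ⟨args', reps, hf, hreps⟩ := exists_foldC_sep_set_replicate (i + 1) (k - 1) Γ
  refine ⟨[.bfig A args'], i + 1, configSort_iff.2 (by simp), ?_⟩
  have h := FoldC.cons (FoldT.bfig A _ args' reps hf) .nil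
  rwa [hreps, List.append_nil, List.append_nil] at h

section IdentityExpansion

theorem ok_false {Δ : BConfig} {f : Bool} {i : ℕ} {A : Ty i} : Ok false Δ f i A :=
  nofun

variable {cuts : Bool}

/-- The second conjunct is the form in which a subformula occurs in the premise of a synchronous
left rule (`fvec`), which the induction needs alongside `vec(A) ⊢ A`. -/
def IdentityExpands (cuts : Bool) {i : ℕ} (A : Ty i) : Prop :=
  DW cuts false (vec A) (posb A) i A ∧ DW cuts false (fvec A) false i A

theorem IdentityExpands.of_posb {i : ℕ} {A : Ty i} (hA : posb A = true)
    (h : DW cuts false (vec A) true i A) : IdentityExpands cuts A := by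
  refine ⟨hA ▸ h, ?_⟩
  rw [fvec, if_pos hA]
  exact .focR hA h (atMostOne_iff.2 (by simp)) ok_false

theorem IdentityExpands.of_negb {i : ℕ} {A : Ty i} (hA : posb A = false)
    (h : DW cuts false (bvec A) false i A) : IdentityExpands cuts A := by
  refine ⟨hA ▸ .focL hA (Z := idZone i) (sub_idZone (by simp)) h (sub_idZone (by simp))
    (atMostOne_iff.2 (by simp)) ok_false, ?_⟩
  rwa [fvec, if_neg (by simp [hA])]

theorem DW.wprodR_of_wrap {i j : ℕ} {k : ℕ} (hk : 1 ≤ k ∧ k ≤ i + 1) {A : Ty (i + 1)} {B : Ty j}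
    {w : BConfig} (hw : Wrap (vec A) k (vec B) w) (hA : DW cuts false (vec A) (posb A) (i + 1) A)
    (hB : DW cuts false (vec B) (posb B) j B) : DW cuts false w true (i + j) (.wprod k hk A B) := by
  have := hw.cboxes_eq (by simp; omega)
  exact .wprodR k hk hA hB hw (atMostOne_iff.2 (by simp_all)) ok_false

theorem IdentityExpands.atom (b : Bias) (name i : ℕ) : IdentityExpands cuts (.atom b name i) := by
  cases b
  · exact .of_posb rfl (.idP name i)
  · exact .of_negb rfl (.idQ name i)

theorem IdentityExpands.over {i j : ℕ} {C : Ty (i + j)} {B : Ty j}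
    (hC : IdentityExpands cuts C) (hB : IdentityExpands cuts B) :
    IdentityExpands cuts (.over C B) := by
  refine .of_negb rfl (.overR ?_ (atMostOne_iff.2 (by simp)) ok_false)
  exact .overL (Z := idZone (i + j)) hB.1 (sub_idZone (by simp)) hC.2 (sub_idZone (by simp))
    (atMostOne_iff.2 (by simp)) ok_false

theorem IdentityExpands.under {i j : ℕ} {A : Ty i} {C : Ty (i + j)}
    (hA : IdentityExpands cuts A) (hC : IdentityExpands cuts C) :
    IdentityExpands cuts (.under A C) := by
  refine .of_negb rfl (.underR ?_ (atMostOne_iff.2 (by simp)) ok_false)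
  exact .underL (Z := idZone (i + j)) hA.1 (sub_idZone (by simp)) hC.2 (sub_idZone (by simp))
    (atMostOne_iff.2 (by simp)) ok_false

theorem IdentityExpands.prod {i j : ℕ} {A : Ty i} {B : Ty j}
    (hA : IdentityExpands cuts A) (hB : IdentityExpands cuts B) :
    IdentityExpands cuts (.prod A B) := by
  refine .of_posb rfl (.prodL (Z := idZone (i + j)) (sub_idZone (by simp)) ?_
    (sub_idZone (by simp)) (atMostOne_iff.2 (by simp)) ok_false)
  exact .prodR hA.1 hB.1 (atMostOne_iff.2 (by simp)) ok_false

theorem IdentityExpands.unitI : IdentityExpands cuts .unitI :=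
  .of_posb rfl (.unitIL (Z := idZone 0) (sub_idZone rfl) .unitIR (sub_idZone (by simp))
    (atMostOne_iff.2 (by simp)) ok_false)

theorem IdentityExpands.circ {i j : ℕ} (k : ℕ) (hk : 1 ≤ k ∧ k ≤ i + 1) {C : Ty (i + j)}
    {B : Ty j} (hC : IdentityExpands cuts C) (hB : IdentityExpands cuts B) :
    IdentityExpands cuts (.circ k hk C B) := by
  obtain ⟨w, hw⟩ := exists_wrap_bvec (Ty.circ k hk C B) k (vec B)
  have hsort := hw.csort_add (by simp; omega)
  have hboxes := hw.cboxes_eq (by simp; omega)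
  refine .of_negb rfl (.circR k hk hw ?_ (atMostOne_iff.2 (by simp)) ok_false)
  exact .circL k hk (Z := idZone (i + j)) hB.1 (sub_idZone (by simp)) hC.2 hw
    (sub_idZone (by simp at hsort; omega)) (atMostOne_iff.2 (by simp_all)) ok_false

theorem IdentityExpands.infx {i j : ℕ} (k : ℕ) (hk : 1 ≤ k ∧ k ≤ i + 1) {A : Ty (i + 1)}
    {C : Ty (i + j)} (hA : IdentityExpands cuts A) (hC : IdentityExpands cuts C) :
    IdentityExpands cuts (.infx k hk A C) := by
  obtain ⟨w, hw⟩ := exists_wrap_vec A k (bvec (Ty.infx k hk A C))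
  have hsort := hw.csort_add (by simp; omega)
  have hboxes := hw.cboxes_eq (by simp; omega)
  refine .of_negb rfl (.infxR k hk hw ?_ (atMostOne_iff.2 (by simp)) ok_false)
  exact .infxL k hk (Z := idZone (i + j)) hA.1 (sub_idZone (by simp)) hC.2 hw
    (sub_idZone (by simp at hsort; omega)) (atMostOne_iff.2 (by simp_all)) ok_false

theorem IdentityExpands.wprod {i j : ℕ} (k : ℕ) (hk : 1 ≤ k ∧ k ≤ i + 1) {A : Ty (i + 1)}
    {B : Ty j} (hA : IdentityExpands cuts A) (hB : IdentityExpands cuts B) :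
    IdentityExpands cuts (.wprod k hk A B) := by
  obtain ⟨w, hw⟩ := exists_wrap_vec A k (vec B)
  have hsort := hw.csort_add (by simp; omega)
  exact .of_posb rfl (.wprodL k hk (Z := idZone (i + j)) hw
    (sub_idZone (by simp at hsort; omega)) (.wprodR_of_wrap hk hw hA.1 hB.1)
    (sub_idZone (by simp)) (atMostOne_iff.2 (by simp)) ok_false)

theorem IdentityExpands.unitJ : IdentityExpands cuts .unitJ :=
  .of_posb rfl (.unitJL (Z := idZone 1) (sub_idZone rfl) .unitJR (sub_idZone (by simp))
    (atMostOne_iff.2 (by simp)) ok_false)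

theorem IdentityExpands.amp {i : ℕ} {A B : Ty i}
    (hA : IdentityExpands cuts A) (hB : IdentityExpands cuts B) :
    IdentityExpands cuts (.amp A B) :=
  .of_negb rfl (.ampR
    (.ampL1 (Z := idZone i) (sub_idZone (by simp)) hA.2 (sub_idZone (by simp))
      (atMostOne_iff.2 (by simp)) ok_false)
    (.ampL2 (Z := idZone i) (sub_idZone (by simp)) hB.2 (sub_idZone (by simp))
      (atMostOne_iff.2 (by simp)) ok_false)
    (atMostOne_iff.2 (by simp)) ok_false)

theorem IdentityExpands.oplus {i : ℕ} {A B : Ty i}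
    (hA : IdentityExpands cuts A) (hB : IdentityExpands cuts B) :
    IdentityExpands cuts (.oplus A B) :=
  .of_posb rfl (.oplusL (Z := idZone i) (sub_idZone (by simp))
    (.oplusR1 hA.1 (atMostOne_iff.2 (by simp)) ok_false) (sub_idZone (by simp))
    (.oplusR2 hB.1 (atMostOne_iff.2 (by simp)) ok_false) (sub_idZone (by simp))
    (atMostOne_iff.2 (by simp)) ok_false)

theorem identityExpands : ∀ {i : ℕ} (A : Ty i), IdentityExpands cuts A
  | _, .atom b name i => .atom b name i
  | _, .over C B => (identityExpands C).over (identityExpands B)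
  | _, .under A C => (identityExpands A).under (identityExpands C)
  | _, .prod A B => (identityExpands A).prod (identityExpands B)
  | _, .unitI => .unitI
  | _, .circ k hk C B => .circ k hk (identityExpands C) (identityExpands B)
  | _, .infx k hk A C => .infx k hk (identityExpands A) (identityExpands C)
  | _, .wprod k hk A B => .wprod k hk (identityExpands A) (identityExpands B)
  | _, .unitJ => .unitJ
  | _, .amp A B => (identityExpands A).amp (identityExpands B)
  | _, .oplus A B => (identityExpands A).oplus (identityExpands B)

end IdentityExpansion

/-- Invertibility of the left discontinuous product rule in DAf: if
`Δ⟨vec(A ⊙ₖ B)⟩ ⊢w C` (possibly containing one focalised formula, the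
indicated occurrence of `A ⊙ₖ B` unfocused) is derivable in DAf, then
`Δ⟨vec(A) |ₖ vec(B)⟩ ⊢w C` (with the same focus, if any) is derivable in
DAf. -/
theorem wprodL_invertible :
    ∀ (i j d : ℕ) (k : ℕ) (hk : 1 ≤ k ∧ k ≤ i + 1) (A : Ty (i + 1)) (B : Ty j)
      (C : Ty d) (Z : Zone) (f : Bool) (s1 w s2 : BConfig),
      Sub Z (vec (Ty.wprod k hk A B)) s1 → AtMostOne s1 f →
      DAf s1 f d C →
      Wrap (vec A) k (vec B) w → Sub Z w s2 →
      DAf s2 f d C := by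
  intro i j d k hk A B C Z f s1 w s2 hs1 hamo hder hw hs2
  have hw0 : cboxes w = 0 := by simpa using hw.cboxes_eq (by simp; omega)
  have hboxes : cboxes s2 = cboxes s1 := by
    simpa [hw0] using hs2.ccount_add hs1 (s := 0) (b := 1)
  have hwprod : DAf w true (i + j) (.wprod k hk A B) :=
    .wprodR_of_wrap hk hw (identityExpands A).1 (identityExpands B).1
  exact .pcut1 rfl rfl hwprod hs1 hder hs2 (atMostOne_iff.2 (hboxes ▸ atMostOne_iff.1 hamo))

end DA
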